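/- In a configuration with exactly one signal whose every cell of value 3 has at most one neighbor of value 3 that precedes it along a fixed Z-path, an update with the 'wrong' letter destroys the signal: let c be a configuration, P a Z-path, and suppose the unique signal of c is at P(i-1) with c(P(i)) = 3, where P(i) = P(i-1) + α·(1,0) (a horizontal step), and all other cells in N_v(P(i-1)) ∪ N_v of neighbors have value ≤ 1. Then F(c,V) contains no signal: every cell of F(c,V) has state ≤ 3. -/

import Mathlib

inductive Letter | H | V
deriving DecidableEq, BEq

/-- Horizontal neighborhood `N_h(x) = {x, x+(1,0), x-(1,0)}`. -/
def Nh (x : ℤ × ℤ) : Finset (ℤ × ℤ) := {x, x + (1, 0), x - (1, 0)}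

/-- Vertical neighborhood `N_v(x) = {x, x+(0,1), x-(0,1)}`. -/
def Nv (x : ℤ × ℤ) : Finset (ℤ × ℤ) := {x, x + (0, 1), x - (0, 1)}

/-- The horizontal update of the fungal automaton. -/
def upH (c : ℤ × ℤ → ℤ) (x : ℤ × ℤ) : ℤ :=
  c x - 2 * (if 4 ≤ c x then 1 else 0) + ∑ y ∈ Nh x, (if 4 ≤ c y then 1 else 0)

/-- The vertical update of the fungal automaton. -/
def upV (c : ℤ × ℤ → ℤ) (x : ℤ × ℤ) : ℤ :=
  c x - 2 * (if 4 ≤ c x then 1 else 0) + ∑ y ∈ Nv x, (if 4 ≤ c y then 1 else 0)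

/-! With a single signal at `p`, the signal indicator is the indicator of `p`, so the vertical
update only loses `2` at `p` and gains `1` on the vertical neighborhood of `p`. Hence `p` drops
to `3`, its vertical neighbors (of state `≤ 1`) reach at most `2`, and every other cell keeps its
state `≤ 3`. The horizontal successor of `p` receives nothing from a vertical update. -/

lemma mem_Nv_self (x : ℤ × ℤ) : x ∈ Nv x := by
  simp [Nv]

lemma upV_of_unique_signal {c : ℤ × ℤ → ℤ} {p : ℤ × ℤ} (hsig : 4 ≤ c p)
    (huniq : ∀ x, 4 ≤ c x → x = p) (x : ℤ × ℤ) :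
    upV c x = c x - 2 * (if x = p then 1 else 0) + (if p ∈ Nv x then 1 else 0) := by
  have hind : ∀ y, (if 4 ≤ c y then (1 : ℤ) else 0) = if y = p then 1 else 0 :=
    fun y => if_congr ⟨huniq y, fun h => h ▸ hsig⟩ rfl rfl
  simp only [upV, hind, Finset.sum_ite_eq']

theorem stmt15_general (c : ℤ × ℤ → ℤ) (p : ℤ × ℤ)
    (hsig : c p = 4) (huniq : ∀ x : ℤ × ℤ, 4 ≤ c x → x = p)
    (hother : ∀ y : ℤ × ℤ, y ≠ p → (∃ z ∈ Nv y, 4 ≤ c z) → c y ≤ 1) :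
    ∀ x : ℤ × ℤ, upV c x ≤ 3 := by
  intro x
  rw [upV_of_unique_signal hsig.ge huniq]
  by_cases hx : x = p
  · subst hx
    simp [mem_Nv_self, hsig]
  by_cases hp : p ∈ Nv x
  · have hlow : c x ≤ 1 := hother x hx ⟨p, hp, hsig.ge⟩
    simp only [hx, hp, if_true, if_false]
    omega
  · have hno : ¬ 4 ≤ c x := fun h => hx (huniq x h)
    simp only [hx, hp, if_false]
    omega

/-- An update with the "wrong" letter destroys a lone signal on a horizontal step:
if the unique signal of `c` sits at `p` with `c (p + (α,0)) = 3` (the next path cell,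
a horizontal step), both vertical neighbors of `p` have state `≤ 1`, and every other
cell having a vertical neighbor of state `≥ 4` has state `≤ 1`, then `F(c,V)` contains
no signal. -/
theorem stmt15 (c : ℤ × ℤ → ℤ) (hrange : ∀ x, 0 ≤ c x ∧ c x ≤ 5)
    (p : ℤ × ℤ) (α : ℤ) (hα : α = 1 ∨ α = -1)
    (hsig : c p = 4) (huniq : ∀ x : ℤ × ℤ, 4 ≤ c x → x = p)
    (hnext : c (p + (α, 0)) = 3)
    (hvert : c (p + (0, 1)) ≤ 1 ∧ c (p - (0, 1)) ≤ 1)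
    (hother : ∀ y : ℤ × ℤ, y ≠ p → (∃ z ∈ Nv y, 4 ≤ c z) → c y ≤ 1) :
    ∀ x : ℤ × ℤ, upV c x ≤ 3 :=
  stmt15_general c p hsig huniq hother
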